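/- Let A and B be finite types and let ρ be a density matrix on A × B. The following are equivalent: (i) there exist finite types A' and B' and a density matrix τ on (A × A') × (B × B') that is an extension of ρ (meaning ∑_{a' : A', b' : B'} τ ((a,a'),(b,b')) ((c,a'),(d,b')) = ρ (a,b) (c,d) for all a, c : A and b, d : B) together with unitary matrices U on A × A' and V on B × B' such that U† τ₁ U and V† τ₂ V are diagonal (where τ₁ and τ₂ are the reduced matrices of τ on A × A' and B × B') and C((U ⊗ V)† τ (U ⊗ V)) = 0; (ii) ρ is separable, i.e., there exist a finite index type I, non-negative reals p : I → ℝ with ∑_i p i = 1, and unit vectors α : I → (A → ℂ) and β : I → (B → ℂ) such that ρ = ∑_i p i · (α_i α_i†) ⊗ (β_i β_i†). -/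

import Mathlib

open Matrix
open scoped Kronecker ComplexOrder

/-- The `l₁`-coherence of a matrix with respect to the standard basis:
the sum of the absolute values of all off-diagonal entries. -/
noncomputable def coh {ι : Type} [Fintype ι] [DecidableEq ι] (M : Matrix ι ι ℂ) : ℝ :=
  ∑ i, ∑ j, if i ≠ j then ‖M i j‖ else 0

/-!
If `(U ⊗ V)† τ (U ⊗ V)` is diagonal, it is `diagonal q` with `q ≥ 0` (it is positive
semidefinite), so `τ = ∑ₖ qₖ |uₖ ⊗ vₖ⟩⟨uₖ ⊗ vₖ|` where `uₖ`, `vₖ` run over the columns of `U`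
and `V`: the extension is a mixture of product vectors. Tracing out the ancillas `A'`, `B'`
keeps it one, since every ancilla slice of a product vector is again a product vector.
Normalising the slices, and reading the total weight off `tr ρ = 1`, makes `ρ` separable.

Conversely, for `ρ = ∑ᵢ pᵢ |αᵢ⟩⟨αᵢ| ⊗ |βᵢ⟩⟨βᵢ|` take the flagged extension
`τ = ∑ᵢ pᵢ |αᵢ ⊗ eᵢ⟩⟨αᵢ ⊗ eᵢ| ⊗ |βᵢ ⊗ eᵢ⟩⟨βᵢ ⊗ eᵢ|` on `(A × I) × (B × I)`. The flags make the
vectors `αᵢ ⊗ eᵢ` orthonormal, so a single unitary `U` sends `e_(a₀, i)` to `αᵢ ⊗ eᵢ` for all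
`i`; conjugating by `U`, `V` and `U ⊗ V` turns the reduced matrices and `τ` itself into
mixtures of standard basis vectors, which are diagonal.
-/

lemma coh_eq_zero_iff_isDiag {ι : Type} [Fintype ι] [DecidableEq ι] (M : Matrix ι ι ℂ) :
    coh M = 0 ↔ M.IsDiag := by
  have hnonneg : ∀ i j, 0 ≤ if i ≠ j then ‖M i j‖ else 0 := fun i j => by positivity
  simp only [coh, Finset.sum_eq_zero_iff_of_nonneg fun i _ => Finset.sum_nonneg fun j _ =>
    hnonneg i j, Finset.sum_eq_zero_iff_of_nonneg fun j _ => hnonneg _ j, Finset.mem_univ,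
    true_implies, ite_eq_right_iff, norm_eq_zero]
  rfl

namespace Matrix

variable {I X Y : Type*}

def vecKron (u : X → ℂ) (v : Y → ℂ) : X × Y → ℂ := fun r => u r.1 * v r.2

infixl:100 " ⊗ᵥ " => vecKron

lemma vecMulVec_vecKron (u : X → ℂ) (v : Y → ℂ) :
    vecMulVec (u ⊗ᵥ v) (star (u ⊗ᵥ v)) = vecMulVec u (star u) ⊗ₖ vecMulVec v (star v) := by
  ext r s
  simp only [vecMulVec_apply, vecKron, Pi.star_apply, star_mul', kroneckerMap_apply]
  ring

lemma star_vecKron_dotProduct_vecKron [Fintype X] [Fintype Y] (u u' : X → ℂ) (v v' : Y → ℂ) :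
    star (u ⊗ᵥ v) ⬝ᵥ (u' ⊗ᵥ v') = (star u ⬝ᵥ u') * (star v ⬝ᵥ v') := by
  simp only [dotProduct, Finset.sum_mul_sum, ← Finset.sum_product', Finset.univ_product_univ,
    vecKron, Pi.star_apply, star_mul']
  exact Finset.sum_congr rfl fun _ _ => by ring

lemma kronecker_mulVec_vecKron {X' Y' : Type*} [Fintype X] [Fintype Y]
    (M : Matrix X' X ℂ) (N : Matrix Y' Y ℂ) (u : X → ℂ) (v : Y → ℂ) :
    (M ⊗ₖ N) *ᵥ (u ⊗ᵥ v) = (M *ᵥ u) ⊗ᵥ (N *ᵥ v) := by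
  ext r
  simp only [mulVec, dotProduct, vecKron, kroneckerMap_apply, Finset.sum_mul_sum,
    ← Finset.sum_product', Finset.univ_product_univ]
  exact Finset.sum_congr rfl fun _ _ => by ring

lemma single_vecKron_single [DecidableEq X] [DecidableEq Y] (a : X) (b : Y) :
    Pi.single a 1 ⊗ᵥ Pi.single b 1 = (Pi.single (a, b) 1 : X × Y → ℂ) := by
  ext ⟨x, y⟩
  by_cases hx : x = a <;> by_cases hy : y = b <;> simp [vecKron, hx, hy]

lemma ofReal_smul_vecKron_ofReal_smul (c d : ℝ) (u : X → ℂ) (v : Y → ℂ) :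
    ((c : ℂ) • u) ⊗ᵥ ((d : ℂ) • v) = ((c * d : ℝ) : ℂ) • (u ⊗ᵥ v) := by
  ext r
  simp only [vecKron, Pi.smul_apply, smul_eq_mul, Complex.ofReal_mul]
  ring

lemma exists_eq_ofReal_smul_unit [Fintype X] [Nonempty X] (w : X → ℂ) :
    ∃ (c : ℝ) (u : X → ℂ), star u ⬝ᵥ u = 1 ∧ w = (c : ℂ) • u := by
  classical
  obtain ⟨x₀⟩ := ‹Nonempty X›
  by_cases hw : w = 0
  · exact ⟨0, Pi.single x₀ 1, by simp, by simp [hw]⟩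
  have hpos : 0 < star w ⬝ᵥ w := dotProduct_star_self_pos_iff.2 hw
  set s := (star w ⬝ᵥ w).re
  have hs : star w ⬝ᵥ w = (s : ℂ) := Complex.eq_re_of_ofReal_le (r := 0) (by simp [hpos.le])
  have hs0 : 0 < s := by simpa [hs] using hpos
  have hc : (Real.sqrt s : ℂ) ≠ 0 := by exact_mod_cast (Real.sqrt_pos.2 hs0).ne'
  refine ⟨Real.sqrt s, (Real.sqrt s : ℂ)⁻¹ • w, ?_,
    by rw [smul_smul, mul_inv_cancel₀ hc, one_smul]⟩
  rw [star_smul, smul_dotProduct, dotProduct_smul, hs, smul_eq_mul, smul_eq_mul,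
    Complex.star_def, map_inv₀, Complex.conj_ofReal, ← mul_assoc, ← mul_inv,
    ← Complex.ofReal_mul, Real.mul_self_sqrt hs0.le, inv_mul_cancel₀ (by exact_mod_cast hs0.ne')]

lemma PosSemidef.exists_eq_diagonal_of_isDiag [DecidableEq X] {M : Matrix X X ℂ}
    (hM : M.PosSemidef) (hdiag : M.IsDiag) :
    ∃ q : X → ℝ, (∀ k, 0 ≤ q k) ∧ M = diagonal fun k => (q k : ℂ) := by
  refine ⟨fun k => (M k k).re, fun k => (Complex.nonneg_iff.1 hM.diag_nonneg).1, ?_⟩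
  conv_lhs => rw [← hdiag.diagonal_diag]
  congr 1
  ext k
  exact Complex.eq_re_of_ofReal_le (r := 0) (by simpa using hM.diag_nonneg)

lemma eq_mul_conjTranspose_mul_mul_conjTranspose [Fintype X] [DecidableEq X] {W : Matrix X X ℂ}
    (hW : W ∈ unitaryGroup X ℂ) (M : Matrix X X ℂ) : M = W * (Wᴴ * M * W) * Wᴴ := by
  have h : W * Wᴴ = 1 := mem_unitaryGroup_iff.1 hW
  simp only [← Matrix.mul_assoc, h, Matrix.one_mul]
  rw [Matrix.mul_assoc, h, Matrix.mul_one]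

lemma conjTranspose_mulVec_col_of_mem_unitaryGroup [Fintype X] [DecidableEq X]
    {U : Matrix X X ℂ} (hU : U ∈ unitaryGroup X ℂ) (k : X) :
    Uᴴ *ᵥ U.col k = Pi.single k 1 := by
  have h : Uᴴ * U = 1 := mem_unitaryGroup_iff'.1 hU
  rw [← mulVec_single_one, mulVec_mulVec, h, one_mulVec]

lemma exists_mem_unitaryGroup_col_eq [Fintype X] [DecidableEq X] {J : Type*} [DecidableEq J]
    {e : J → X} (he : Function.Injective e) {v : J → X → ℂ}
    (hv : ∀ j k, star (v j) ⬝ᵥ v k = if j = k then 1 else 0) :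
    ∃ U ∈ unitaryGroup X ℂ, ∀ j, U.col (e j) = v j := by
  let w : X → EuclideanSpace ℂ X := Function.extend e (fun j => WithLp.toLp 2 (v j)) 0
  have hw : Orthonormal ℂ ((Set.range e).domRestrict w) := by
    rw [orthonormal_iff_ite]
    rintro ⟨_, hj⟩ ⟨_, hk⟩
    obtain ⟨j, rfl⟩ := Set.mem_range.1 hj
    obtain ⟨k, rfl⟩ := Set.mem_range.1 hk
    simp only [Set.domRestrict_apply, w, he.extend_apply, EuclideanSpace.inner_toLp_toLp]
    rw [dotProduct_comm, hv]
    simp [he.eq_iff]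
  obtain ⟨b, hb⟩ := hw.exists_orthonormalBasis_extension_of_card_eq (by simp)
  refine ⟨(EuclideanSpace.basisFun X ℂ).toBasis.toMatrix b,
    (EuclideanSpace.basisFun X ℂ).toMatrix_orthonormalBasis_mem_unitary b, fun j => ?_⟩
  ext x
  simp [Module.Basis.toMatrix_apply, hb (e j) ⟨j, rfl⟩, w, he.extend_apply]

section Mixture

variable [Fintype I]

noncomputable def mixture (p : I → ℝ) (v : I → X → ℂ) : Matrix X X ℂ :=
  ∑ i, (p i : ℂ) • vecMulVec (v i) (star (v i))

lemma posSemidef_mixture [Finite X] {p : I → ℝ} (hp : ∀ i, 0 ≤ p i) (v : I → X → ℂ) :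
    (mixture p v).PosSemidef :=
  posSemidef_sum _ fun i _ =>
    (posSemidef_vecMulVec_self_star (v i)).smul (by exact_mod_cast hp i)

lemma trace_mixture [Fintype X] (p : I → ℝ) (v : I → X → ℂ) :
    (mixture p v).trace = ∑ i, (p i : ℂ) * (star (v i) ⬝ᵥ v i) := by
  simp only [mixture, trace_sum, trace_smul, trace_vecMulVec, smul_eq_mul]
  exact Finset.sum_congr rfl fun _ _ => by rw [dotProduct_comm]

lemma conjTranspose_mul_mixture_mul [Fintype X] {Z : Type*} (p : I → ℝ) (v : I → X → ℂ)
    (W : Matrix X Z ℂ) :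
    Wᴴ * mixture p v * W = mixture p fun i => Wᴴ *ᵥ v i := by
  simp only [mixture, Matrix.mul_sum, Matrix.sum_mul, Matrix.mul_smul, Matrix.smul_mul,
    mul_vecMulVec, vecMulVec_mul, star_mulVec, conjTranspose_conjTranspose]

lemma isDiag_mixture_single [DecidableEq X] (p : I → ℝ) (k : I → X) :
    (mixture p fun i => Pi.single (k i) 1).IsDiag := by
  intro r s hrs
  simp only [mixture, Matrix.sum_apply, Matrix.smul_apply, vecMulVec_apply, Pi.star_apply]
  refine Finset.sum_eq_zero fun i _ => ?_
  by_cases hr : r = k i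
  · simp [hr, Ne.symm (hr ▸ hrs)]
  · simp [hr]

lemma mul_diagonal_mul_conjTranspose [Fintype X] [DecidableEq X] (W : Matrix Y X ℂ) (q : X → ℝ) :
    W * diagonal (fun k => (q k : ℂ)) * Wᴴ = mixture q W.col := by
  ext r s
  simp only [mul_apply, diagonal_apply, mul_ite, mul_zero, Finset.sum_ite_eq', Finset.mem_univ,
    if_true, conjTranspose_apply, mixture, Matrix.sum_apply, Matrix.smul_apply, vecMulVec_apply,
    Pi.star_apply, smul_eq_mul, col_apply]
  exact Finset.sum_congr rfl fun _ _ => by ring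

lemma mixture_vecKron (p : I → ℝ) (x : I → X → ℂ) (y : I → Y → ℂ) :
    (mixture p fun i => x i ⊗ᵥ y i) =
      ∑ i, (p i : ℂ) • (vecMulVec (x i) (star (x i)) ⊗ₖ vecMulVec (y i) (star (y i))) := by
  simp only [mixture, vecMulVec_vecKron]

lemma mixture_ofReal_smul (p c : I → ℝ) (v : I → X → ℂ) :
    (mixture p fun i => (c i : ℂ) • v i) = mixture (fun i => p i * c i ^ 2) v := by
  simp only [mixture, star_smul, Complex.star_def, Complex.conj_ofReal, smul_vecMulVec,
    vecMulVec_smul, smul_smul, Complex.ofReal_mul, Complex.ofReal_pow]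
  exact Finset.sum_congr rfl fun _ _ => by ring_nf

lemma exists_unit_mixture_vecKron_eq [Fintype X] [Fintype Y] [Nonempty X] [Nonempty Y]
    {p : I → ℝ} (hp : ∀ i, 0 ≤ p i) (x : I → X → ℂ) (y : I → Y → ℂ) :
    ∃ (p' : I → ℝ) (x' : I → X → ℂ) (y' : I → Y → ℂ), (∀ i, 0 ≤ p' i) ∧
      (∀ i, star (x' i) ⬝ᵥ x' i = 1) ∧ (∀ i, star (y' i) ⬝ᵥ y' i = 1) ∧
      (mixture p fun i => x i ⊗ᵥ y i) = mixture p' fun i => x' i ⊗ᵥ y' i := by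
  choose c x' hx' hx using fun i => exists_eq_ofReal_smul_unit (x i)
  choose d y' hy' hy using fun i => exists_eq_ofReal_smul_unit (y i)
  refine ⟨fun i => p i * (c i * d i) ^ 2, x', y', fun i => by have := hp i; positivity, hx', hy',
    ?_⟩
  simp only [hx, hy, ofReal_smul_vecKron_ofReal_smul, mixture_ofReal_smul]

def traceRight [Fintype Y] (M : Matrix (X × Y) (X × Y) ℂ) : Matrix X X ℂ :=
  of fun x x' : X => ∑ y, M (x, y) (x', y)

def traceLeft [Fintype X] (M : Matrix (X × Y) (X × Y) ℂ) : Matrix Y Y ℂ :=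
  of fun y y' : Y => ∑ x, M (x, y) (x, y')

lemma traceRight_mixture_vecKron [Fintype Y] (p : I → ℝ) (x : I → X → ℂ) {y : I → Y → ℂ}
    (hy : ∀ i, star (y i) ⬝ᵥ y i = 1) :
    traceRight (mixture p fun i => x i ⊗ᵥ y i) = mixture p x := by
  ext r s
  simp only [traceRight, mixture, of_apply, Matrix.sum_apply, Matrix.smul_apply, vecMulVec_apply,
    Pi.star_apply, vecKron, star_mul', smul_eq_mul]
  rw [Finset.sum_comm]
  refine Finset.sum_congr rfl fun i _ => ?_
  have h := hy i
  simp only [dotProduct, Pi.star_apply] at h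
  rw [← mul_one (x i r * star (x i s)), ← h, Finset.mul_sum, Finset.mul_sum]
  exact Finset.sum_congr rfl fun _ _ => by ring

lemma traceLeft_mixture_vecKron [Fintype X] (p : I → ℝ) {x : I → X → ℂ} (y : I → Y → ℂ)
    (hx : ∀ i, star (x i) ⬝ᵥ x i = 1) :
    traceLeft (mixture p fun i => x i ⊗ᵥ y i) = mixture p y := by
  ext r s
  simp only [traceLeft, mixture, of_apply, Matrix.sum_apply, Matrix.smul_apply, vecMulVec_apply,
    Pi.star_apply, vecKron, star_mul', smul_eq_mul]
  rw [Finset.sum_comm]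
  refine Finset.sum_congr rfl fun i _ => ?_
  have h := hx i
  simp only [dotProduct, Pi.star_apply] at h
  rw [← mul_one (y i r * star (y i s)), ← h, Finset.mul_sum, Finset.mul_sum]
  exact Finset.sum_congr rfl fun _ _ => by ring

variable {A A' B B' : Type*} [Fintype A'] [Fintype B']

def traceAncilla (τ : Matrix ((A × A') × (B × B')) ((A × A') × (B × B')) ℂ) :
    Matrix (A × B) (A × B) ℂ :=
  of fun r s : A × B => ∑ a', ∑ b', τ ((r.1, a'), (r.2, b')) ((s.1, a'), (s.2, b'))

lemma traceAncilla_mixture (p : I → ℝ) (w : I → (A × A') × (B × B') → ℂ) :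
    traceAncilla (mixture p w) =
      mixture (fun j : I × A' × B' => p j.1) fun j r => w j.1 ((r.1, j.2.1), (r.2, j.2.2)) := by
  ext r s
  simp only [traceAncilla, mixture, of_apply, Matrix.sum_apply, Matrix.smul_apply,
    vecMulVec_apply, Pi.star_apply, Fintype.sum_prod_type]
  conv_lhs => enter [2, x]; rw [Finset.sum_comm]
  exact Finset.sum_comm

end Mixture

def IsSeparable {A B : Type*} [Fintype A] [Fintype B] (ρ : Matrix (A × B) (A × B) ℂ) : Prop :=
  ∃ (I : Type) (_ : Fintype I) (p : I → ℝ) (α : I → A → ℂ) (β : I → B → ℂ),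
    (∀ i, 0 ≤ p i) ∧ (∑ i, p i) = 1 ∧ (∀ i, star (α i) ⬝ᵥ α i = 1) ∧
      (∀ i, star (β i) ⬝ᵥ β i = 1) ∧
      ρ = ∑ i, (p i : ℂ) • (vecMulVec (α i) (star (α i)) ⊗ₖ vecMulVec (β i) (star (β i)))

section Separable

variable {A B : Type} [Fintype A] [Fintype B] [Nonempty A] [Nonempty B]
  {ρ : Matrix (A × B) (A × B) ℂ}

lemma isSeparable_of_eq_mixture (htr : ρ.trace = 1) {I : Type} [Fintype I] {p : I → ℝ}
    (hp : ∀ i, 0 ≤ p i) {x : I → A → ℂ} {y : I → B → ℂ}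
    (hρ : ρ = mixture p fun i => x i ⊗ᵥ y i) : IsSeparable ρ := by
  obtain ⟨p', x', y', hp', hx', hy', hmix⟩ := exists_unit_mixture_vecKron_eq hp x y
  rw [hmix] at hρ
  refine ⟨I, inferInstance, p', x', y', hp', ?_, hx', hy', hρ.trans (mixture_vecKron _ _ _)⟩
  rw [hρ, trace_mixture] at htr
  simp only [star_vecKron_dotProduct_vecKron, hx', hy', mul_one] at htr
  exact_mod_cast htr

lemma isSeparable_of_isDiag_conj [DecidableEq A] [DecidableEq B] {A' B' : Type} [Fintype A']
    [DecidableEq A'] [Fintype B'] [DecidableEq B'] (htr : ρ.trace = 1)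
    {τ : Matrix ((A × A') × (B × B')) ((A × A') × (B × B')) ℂ} (hτ : τ.PosSemidef)
    (hρ : traceAncilla τ = ρ) {U : Matrix (A × A') (A × A') ℂ} {V : Matrix (B × B') (B × B') ℂ}
    (hU : U ∈ unitaryGroup (A × A') ℂ) (hV : V ∈ unitaryGroup (B × B') ℂ)
    (hdiag : ((U ⊗ₖ V)ᴴ * τ * (U ⊗ₖ V)).IsDiag) : IsSeparable ρ := by
  obtain ⟨q, hq, hσ⟩ :=
    (hτ.conjTranspose_mul_mul_same (U ⊗ₖ V)).exists_eq_diagonal_of_isDiag hdiag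
  have hτq : τ = mixture q fun k => U.col k.1 ⊗ᵥ V.col k.2 := by
    rw [eq_mul_conjTranspose_mul_mul_conjTranspose (kronecker_mem_unitary hU hV) τ, hσ,
      mul_diagonal_mul_conjTranspose]
    rfl
  refine isSeparable_of_eq_mixture htr (p := fun j : ((A × A') × (B × B')) × A' × B' => q j.1)
    (fun j => hq j.1) (x := fun j a => U (a, j.2.1) j.1.1) (y := fun j b => V (b, j.2.2) j.1.2) ?_
  rw [← hρ, hτq, traceAncilla_mixture]
  rfl

end Separable

section Flagged

variable {A B : Type*} [Fintype I] [DecidableEq I]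

lemma star_vecKron_single_dotProduct_vecKron_single [Fintype A] {α : I → A → ℂ}
    (hα : ∀ i, star (α i) ⬝ᵥ α i = 1) (i j : I) :
    star (α i ⊗ᵥ Pi.single i 1) ⬝ᵥ (α j ⊗ᵥ Pi.single j 1) = if i = j then 1 else 0 := by
  rw [star_vecKron_dotProduct_vecKron]
  by_cases h : i = j
  · subst h; simp [hα]
  · simp [h]

noncomputable def flaggedExtension (p : I → ℝ) (α : I → A → ℂ) (β : I → B → ℂ) :
    Matrix ((A × I) × (B × I)) ((A × I) × (B × I)) ℂ :=
  mixture p fun i => (α i ⊗ᵥ Pi.single i 1) ⊗ᵥ (β i ⊗ᵥ Pi.single i 1)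

lemma trace_flaggedExtension [Fintype A] [Fintype B] {p : I → ℝ} (hp : ∑ i, p i = 1)
    {α : I → A → ℂ} {β : I → B → ℂ}
    (hα : ∀ i, star (α i) ⬝ᵥ α i = 1) (hβ : ∀ i, star (β i) ⬝ᵥ β i = 1) :
    (flaggedExtension p α β).trace = 1 := by
  simp only [flaggedExtension, trace_mixture, star_vecKron_dotProduct_vecKron,
    star_vecKron_single_dotProduct_vecKron_single hα,
    star_vecKron_single_dotProduct_vecKron_single hβ]
  simp [← Complex.ofReal_sum, hp]

lemma traceAncilla_flaggedExtension (p : I → ℝ) (α : I → A → ℂ) (β : I → B → ℂ) :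
    traceAncilla (flaggedExtension p α β) = mixture p fun i => α i ⊗ᵥ β i := by
  rw [flaggedExtension, traceAncilla_mixture, mixture, mixture]
  refine (Fintype.sum_of_injective (fun i => (i, i, i)) (fun i j h => congrArg Prod.fst h)
    _ _ ?_ fun i => ?_).symm
  · rintro ⟨i, a', b'⟩ hj
    have hflag : a' ≠ i ∨ b' ≠ i := by
      contrapose! hj
      exact ⟨i, by simp [hj]⟩
    have hzero : (fun r : A × B =>
        ((α i ⊗ᵥ Pi.single i 1) ⊗ᵥ (β i ⊗ᵥ Pi.single i 1)) ((r.1, a'), (r.2, b'))) = 0 := by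
      ext r
      rcases hflag with h | h <;> simp [vecKron, h]
    simp [hzero]
  · congr 3 <;> (ext r; simp [vecKron])

lemma exists_mem_unitaryGroup_conjTranspose_mulVec_vecKron_single [Fintype A] [DecidableEq A]
    (a₀ : A) {α : I → A → ℂ} (hα : ∀ i, star (α i) ⬝ᵥ α i = 1) :
    ∃ U ∈ unitaryGroup (A × I) ℂ, ∀ i, Uᴴ *ᵥ (α i ⊗ᵥ Pi.single i 1) = Pi.single (a₀, i) 1 := by
  obtain ⟨U, hU, hcol⟩ := exists_mem_unitaryGroup_col_eq (e := fun i => (a₀, i))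
    (fun i j h => (Prod.ext_iff.1 h).2) (star_vecKron_single_dotProduct_vecKron_single hα)
  exact ⟨U, hU, fun i => by rw [← hcol, conjTranspose_mulVec_col_of_mem_unitaryGroup hU]⟩

lemma exists_unitary_isDiag_flaggedExtension [Fintype A] [DecidableEq A] [Nonempty A]
    [Fintype B] [DecidableEq B] [Nonempty B] (p : I → ℝ) {α : I → A → ℂ} {β : I → B → ℂ}
    (hα : ∀ i, star (α i) ⬝ᵥ α i = 1) (hβ : ∀ i, star (β i) ⬝ᵥ β i = 1) :
    ∃ U ∈ unitaryGroup (A × I) ℂ, ∃ V ∈ unitaryGroup (B × I) ℂ,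
      (Uᴴ * traceRight (flaggedExtension p α β) * U).IsDiag ∧
      (Vᴴ * traceLeft (flaggedExtension p α β) * V).IsDiag ∧
      ((U ⊗ₖ V)ᴴ * flaggedExtension p α β * (U ⊗ₖ V)).IsDiag := by
  obtain ⟨U, hU, hUα⟩ := exists_mem_unitaryGroup_conjTranspose_mulVec_vecKron_single
    (Classical.arbitrary A) hα
  obtain ⟨V, hV, hVβ⟩ := exists_mem_unitaryGroup_conjTranspose_mulVec_vecKron_single
    (Classical.arbitrary B) hβ
  refine ⟨U, hU, V, hV, ?_, ?_, ?_⟩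
  · rw [flaggedExtension, traceRight_mixture_vecKron _ _ fun i => by
      simpa using star_vecKron_single_dotProduct_vecKron_single hβ i i,
      conjTranspose_mul_mixture_mul]
    simp only [hUα]
    exact isDiag_mixture_single _ _
  · rw [flaggedExtension, traceLeft_mixture_vecKron _ _ fun i => by
      simpa using star_vecKron_single_dotProduct_vecKron_single hα i i,
      conjTranspose_mul_mixture_mul]
    simp only [hVβ]
    exact isDiag_mixture_single _ _
  · rw [flaggedExtension, conjTranspose_mul_mixture_mul, conjTranspose_kronecker]
    simp only [kronecker_mulVec_vecKron, hUα, hVβ, single_vecKron_single]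
    exact isDiag_mixture_single _ _

end Flagged

end Matrix

theorem stmt_6_general {A B : Type} [Fintype A] [DecidableEq A] [Fintype B] [DecidableEq B]
    (ρ : Matrix (A × B) (A × B) ℂ) (htr : ρ.trace = 1) :
    (∃ (A' B' : Type) (_ : Fintype A') (_ : DecidableEq A') (_ : Fintype B')
        (_ : DecidableEq B')
        (τ : Matrix ((A × A') × (B × B')) ((A × A') × (B × B')) ℂ),
      τ.PosSemidef ∧ τ.trace = 1 ∧
      (∀ (a c : A) (b d : B),
        (∑ a' : A', ∑ b' : B', τ ((a, a'), (b, b')) ((c, a'), (d, b'))) = ρ (a, b) (c, d)) ∧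
      ∃ (U : Matrix (A × A') (A × A') ℂ) (V : Matrix (B × B') (B × B') ℂ),
        U ∈ Matrix.unitaryGroup (A × A') ℂ ∧ V ∈ Matrix.unitaryGroup (B × B') ℂ ∧
        (Uᴴ * (Matrix.of fun x x' : A × A' => ∑ y : B × B', τ (x, y) (x', y)) * U).IsDiag ∧
        (Vᴴ * (Matrix.of fun y y' : B × B' => ∑ x : A × A', τ (x, y) (x, y')) * V).IsDiag ∧
        coh ((U ⊗ₖ V)ᴴ * τ * (U ⊗ₖ V)) = 0) ↔
    (∃ (I : Type) (_ : Fintype I) (p : I → ℝ) (α : I → A → ℂ) (β : I → B → ℂ),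
      (∀ i, 0 ≤ p i) ∧ (∑ i, p i) = 1 ∧
      (∀ i, ∑ x, star (α i x) * α i x = 1) ∧
      (∀ i, ∑ x, star (β i x) * β i x = 1) ∧
      ρ = ∑ i, (p i : ℂ) •
        ((Matrix.of fun x y : A => α i x * star (α i y)) ⊗ₖ
          (Matrix.of fun x y : B => β i x * star (β i y)))) := by
  obtain ⟨_, _⟩ := nonempty_prod.1 (not_isEmpty_iff.1 fun _ : IsEmpty (A × B) => by
    simp [trace] at htr)
  change _ ↔ ρ.IsSeparable
  constructor
  · rintro ⟨A', B', _, _, _, _, τ, hτ, -, hmarg, U, V, hU, hV, -, -, hcoh⟩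
    exact isSeparable_of_isDiag_conj htr hτ (by ext ⟨a, b⟩ ⟨c, d⟩; exact hmarg a c b d) hU hV
      ((coh_eq_zero_iff_isDiag _).1 hcoh)
  · rintro ⟨I, _, p, α, β, hp, hsum, hα, hβ, hρ⟩
    classical
    obtain ⟨U, hU, V, hV, hdiag₁, hdiag₂, hdiag⟩ :=
      exists_unitary_isDiag_flaggedExtension p hα hβ
    refine ⟨I, I, inferInstance, inferInstance, inferInstance, inferInstance,
      flaggedExtension p α β, posSemidef_mixture hp _, trace_flaggedExtension hsum hα hβ,
      fun a c b d => ?_, U, V, hU, hV, hdiag₁, hdiag₂, (coh_eq_zero_iff_isDiag _).2 hdiag⟩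
    rw [hρ, ← mixture_vecKron, ← traceAncilla_flaggedExtension]
    rfl

/-- A bipartite state admits an extension whose correlated coherence (with
respect to the local eigenbases of the extension's reduced states) vanishes
if and only if the state is separable. -/
theorem stmt_6 {A B : Type} [Fintype A] [DecidableEq A] [Fintype B] [DecidableEq B]
    (ρ : Matrix (A × B) (A × B) ℂ) (hρ : ρ.PosSemidef) (htr : ρ.trace = 1) :
    (∃ (A' B' : Type) (_ : Fintype A') (_ : DecidableEq A') (_ : Fintype B')
        (_ : DecidableEq B')
        (τ : Matrix ((A × A') × (B × B')) ((A × A') × (B × B')) ℂ),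
      τ.PosSemidef ∧ τ.trace = 1 ∧
      (∀ (a c : A) (b d : B),
        (∑ a' : A', ∑ b' : B', τ ((a, a'), (b, b')) ((c, a'), (d, b'))) = ρ (a, b) (c, d)) ∧
      ∃ (U : Matrix (A × A') (A × A') ℂ) (V : Matrix (B × B') (B × B') ℂ),
        U ∈ Matrix.unitaryGroup (A × A') ℂ ∧ V ∈ Matrix.unitaryGroup (B × B') ℂ ∧
        (Uᴴ * (Matrix.of fun x x' : A × A' => ∑ y : B × B', τ (x, y) (x', y)) * U).IsDiag ∧
        (Vᴴ * (Matrix.of fun y y' : B × B' => ∑ x : A × A', τ (x, y) (x, y')) * V).IsDiag ∧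
        coh ((U ⊗ₖ V)ᴴ * τ * (U ⊗ₖ V)) = 0) ↔
    (∃ (I : Type) (_ : Fintype I) (p : I → ℝ) (α : I → A → ℂ) (β : I → B → ℂ),
      (∀ i, 0 ≤ p i) ∧ (∑ i, p i) = 1 ∧
      (∀ i, ∑ x, star (α i x) * α i x = 1) ∧
      (∀ i, ∑ x, star (β i x) * β i x = 1) ∧
      ρ = ∑ i, (p i : ℂ) •
        ((Matrix.of fun x y : A => α i x * star (α i y)) ⊗ₖ
          (Matrix.of fun x y : B => β i x * star (β i y)))) :=
  stmt_6_general ρ htr
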